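/- On a rotational surface X(u,v) = (f(u)cos v, f(u)sin v, g(u)) in the Cartan-Vranceanu space (M, ds²_{ℓ,m}), the parallel u = u₀ (with v as parameter) is a geodesic of the surface if and only if f'(u₀)·(2 + ℓ² f(u₀)² − 2m f(u₀)²) = 0 (assuming 1 + m f(u₀)² > 0). -/

import Mathlib

open Real

/-- Partial derivative in the `i`-th coordinate direction on `ℝ²`. -/
noncomputable def pd2 (i : Fin 2) (f : (Fin 2 → ℝ) → ℝ) (p : Fin 2 → ℝ) : ℝ :=
  fderiv ℝ f p (Pi.single i 1)

/-- Christoffel symbols of a 2-dimensional metric `G` given in coordinates. -/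
noncomputable def christoffel2 (G : (Fin 2 → ℝ) → Matrix (Fin 2) (Fin 2) ℝ)
    (k i j : Fin 2) (p : Fin 2 → ℝ) : ℝ :=
  (1 / 2) * ∑ r : Fin 2, (G p)⁻¹ k r *
    (pd2 i (fun q => G q r j) p + pd2 j (fun q => G q r i) p
      - pd2 r (fun q => G q i j) p)

/-- The geodesic equation for the 2-dimensional metric `G` at time `t`. -/
def geodesicEq2 (G : (Fin 2 → ℝ) → Matrix (Fin 2) (Fin 2) ℝ)
    (c : ℝ → Fin 2 → ℝ) (t : ℝ) : Prop :=
  ∀ k : Fin 2, deriv (deriv c) t k +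
    ∑ i : Fin 2, ∑ j : Fin 2,
      christoffel2 G k i j (c t) * deriv c t i * deriv c t j = 0

/-- First fundamental form of the rotational surface
`X(u,v) = (f(u) cos v, f(u) sin v, g(u))` in the Cartan–Vranceanu space `(M, ds²_{ℓ,m})`,
in the coordinates `(u, v)`:
`E = f'²/(1+mf²)² + g'²`, `F = −ℓ f² g'/(2(1+mf²))`, `G = (4f² + ℓ²f⁴)/(4(1+mf²)²)`. -/
noncomputable def gInd (l m : ℝ) (f g : ℝ → ℝ) (p : Fin 2 → ℝ) :
    Matrix (Fin 2) (Fin 2) ℝ :=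
  !![(deriv f (p 0)) ^ 2 / (1 + m * f (p 0) ^ 2) ^ 2 + (deriv g (p 0)) ^ 2,
     -(l * f (p 0) ^ 2 * deriv g (p 0)) / (2 * (1 + m * f (p 0) ^ 2));
     -(l * f (p 0) ^ 2 * deriv g (p 0)) / (2 * (1 + m * f (p 0) ^ 2)),
     (4 * f (p 0) ^ 2 + l ^ 2 * f (p 0) ^ 4) / (4 * (1 + m * f (p 0) ^ 2) ^ 2)]


noncomputable def Ecv (l m : ℝ) (f g : ℝ → ℝ) (u : ℝ) : ℝ :=
  (deriv f u) ^ 2 / (1 + m * f u ^ 2) ^ 2 + (deriv g u) ^ 2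

noncomputable def Fcv (l m : ℝ) (f g : ℝ → ℝ) (u : ℝ) : ℝ :=
  -(l * f u ^ 2 * deriv g u) / (2 * (1 + m * f u ^ 2))

noncomputable def Gcv (l m : ℝ) (f g : ℝ → ℝ) (u : ℝ) : ℝ :=
  (4 * f u ^ 2 + l ^ 2 * f u ^ 4) / (4 * (1 + m * f u ^ 2) ^ 2)

lemma gInd_eq (l m : ℝ) (f g : ℝ → ℝ) (p : Fin 2 → ℝ) :
    gInd l m f g p = !![Ecv l m f g (p 0), Fcv l m f g (p 0);
      Fcv l m f g (p 0), Gcv l m f g (p 0)] := rfl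

lemma pd2_comp (h : ℝ → ℝ) (p : Fin 2 → ℝ) (hh : DifferentiableAt ℝ h (p 0)) (i : Fin 2) :
    pd2 i (fun q => h (q 0)) p = (Pi.single i (1:ℝ) : Fin 2 → ℝ) 0 * deriv h (p 0) := by
  have hcomp : HasFDerivAt (fun q : Fin 2 → ℝ => h (q 0))
      ((fderiv ℝ h (p 0)).comp
        (ContinuousLinearMap.proj (R := ℝ) (φ := fun _ : Fin 2 => ℝ) 0)) p :=
    HasFDerivAt.comp p hh.hasFDerivAt
      ((ContinuousLinearMap.proj (R := ℝ) (φ := fun _ : Fin 2 => ℝ) 0).hasFDerivAt)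
  unfold pd2
  rw [hcomp.fderiv]
  simp only [ContinuousLinearMap.coe_comp', Function.comp_apply,
    ContinuousLinearMap.proj_apply]
  calc fderiv ℝ h (p 0) ((Pi.single i (1:ℝ) : Fin 2 → ℝ) 0)
      = fderiv ℝ h (p 0) (((Pi.single i (1:ℝ) : Fin 2 → ℝ) 0) • (1:ℝ)) := by
        rw [smul_eq_mul, mul_one]
    _ = (Pi.single i (1:ℝ) : Fin 2 → ℝ) 0 * deriv h (p 0) := by
        rw [map_smul, smul_eq_mul, fderiv_apply_one_eq_deriv]


/-- On a rotational surface `X(u,v) = (f(u)cos v, f(u)sin v, g(u))` in the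
Cartan–Vranceanu space, the parallel `u = u₀` (parametrized by `v`) is a geodesic of
the surface if and only if `f'(u₀)(2 + ℓ² f(u₀)² − 2m f(u₀)²) = 0`. -/
theorem stmt16 (l m u0 : ℝ) (f g : ℝ → ℝ)
    (hf : ContDiff ℝ (⊤ : ℕ∞) f) (hg : ContDiff ℝ (⊤ : ℕ∞) g)
    (hfpos : ∀ u, 0 < f u)
    (hreg : ∀ u, 0 < (deriv f u) ^ 2 + (deriv g u) ^ 2)
    (hD : 0 < 1 + m * f u0 ^ 2) :
    (∀ t : ℝ, geodesicEq2 (gInd l m f g) (fun s => ![u0, s]) t) ↔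
      deriv f u0 * (2 + l ^ 2 * f u0 ^ 2 - 2 * m * f u0 ^ 2) = 0 := by
  have hDne : (1 + m * f u0 ^ 2) ≠ 0 := ne_of_gt hD
  have hdf : DifferentiableAt ℝ f u0 := hf.differentiable (by simp) u0
  have hdf' : DifferentiableAt ℝ (deriv f) u0 := by
    have h1 : ContDiff ℝ (↑(⊤:ℕ∞)) f := hf.of_le (by simp)
    exact ((contDiff_infty_iff_deriv.mp h1).2.differentiable (by simp)) u0
  have hdg' : DifferentiableAt ℝ (deriv g) u0 := by
    have h1 : ContDiff ℝ (↑(⊤:ℕ∞)) g := hg.of_le (by simp)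
    exact ((contDiff_infty_iff_deriv.mp h1).2.differentiable (by simp)) u0
  -- derivative of the curve
  have hderiv_c : deriv (fun s : ℝ => ![u0, s]) = fun _ : ℝ => ![(0:ℝ), 1] := by
    funext s
    refine HasDerivAt.deriv ?_
    rw [hasDerivAt_pi]
    intro i
    fin_cases i
    · simpa using hasDerivAt_const s u0
    · simpa using hasDerivAt_id' s
  have hdd : deriv (deriv (fun s : ℝ => ![u0, s])) = fun _ : ℝ => (0 : Fin 2 → ℝ) := by
    rw [hderiv_c]; funext x; exact deriv_const x _
  -- derivative of Gcv
  have Hf : HasDerivAt f (deriv f u0) u0 := hdf.hasDerivAt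
  have Hf2 : HasDerivAt (fun u => f u ^ 2) (2 * f u0 * deriv f u0) u0 := by
    simpa using Hf.fun_pow 2
  have Hf4 : HasDerivAt (fun u => f u ^ 4) (4 * f u0 ^ 3 * deriv f u0) u0 := by
    simpa using Hf.fun_pow 4
  have HD : HasDerivAt (fun u => 1 + m * f u ^ 2) (m * (2 * f u0 * deriv f u0)) u0 := by
    simpa using (Hf2.const_mul m).const_add (1:ℝ)
  have Hnum : HasDerivAt (fun u => 4 * f u ^ 2 + l ^ 2 * f u ^ 4)
      (4 * (2 * f u0 * deriv f u0) + l ^ 2 * (4 * f u0 ^ 3 * deriv f u0)) u0 :=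
    (Hf2.const_mul 4).add (Hf4.const_mul (l ^ 2))
  have Hden : HasDerivAt (fun u => 4 * (1 + m * f u ^ 2) ^ 2)
      (4 * (2 * (1 + m * f u0 ^ 2) * (m * (2 * f u0 * deriv f u0)))) u0 := by
    have := (HD.pow 2).const_mul 4
    simpa using this
  have hden_ne : 4 * (1 + m * f u0 ^ 2) ^ 2 ≠ 0 := by positivity
  have HGc : HasDerivAt (Gcv l m f g) _ u0 := Hnum.div Hden hden_ne
  have hGcdiff : DifferentiableAt ℝ (Gcv l m f g) u0 := HGc.differentiableAt
  have hGc' : deriv (Gcv l m f g) u0 =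
      f u0 * (deriv f u0 * (2 + l ^ 2 * f u0 ^ 2 - 2 * m * f u0 ^ 2))
        / (1 + m * f u0 ^ 2) ^ 3 := by
    rw [HGc.deriv]
    field_simp
    ring
  -- differentiability of E, F entries
  have hEdiff : DifferentiableAt ℝ (Ecv l m f g) u0 := by
    have : DifferentiableAt ℝ
        (fun u => (deriv f u) ^ 2 / (1 + m * f u ^ 2) ^ 2 + (deriv g u) ^ 2) u0 :=
      ((hdf'.pow 2).div (((differentiableAt_const (1:ℝ)).add
        ((hdf.pow 2).const_mul m)).pow 2) (pow_ne_zero 2 hDne)).add (hdg'.pow 2)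
    exact this
  have hFdiff : DifferentiableAt ℝ (Fcv l m f g) u0 := by
    have : DifferentiableAt ℝ
        (fun u => -(l * f u ^ 2 * deriv g u) / (2 * (1 + m * f u ^ 2))) u0 := by
      refine DifferentiableAt.div ?_ ?_ (by positivity)
      · exact (((hdf.pow 2).const_mul l).mul hdg').neg
      · exact ((differentiableAt_const (1:ℝ)).add ((hdf.pow 2).const_mul m)).const_mul 2
    exact this
  -- entry functions
  have hent01 : (fun q : Fin 2 → ℝ => gInd l m f g q 0 1) =
      fun q => Fcv l m f g (q 0) := by
    funext q; rw [gInd_eq]; simp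
  have hent11 : (fun q : Fin 2 → ℝ => gInd l m f g q 1 1) =
      fun q => Gcv l m f g (q 0) := by
    funext q; rw [gInd_eq]; simp
  -- christoffel computation
  have hchr : ∀ (t : ℝ) (k : Fin 2), christoffel2 (gInd l m f g) k 1 1 ![u0, t] =
      (1 / 2) * ((gInd l m f g ![u0, t])⁻¹ k 0 * (-(deriv (Gcv l m f g) u0))) := by
    intro t k
    unfold christoffel2
    rw [Fin.sum_univ_two, hent01, hent11,
      pd2_comp (Fcv l m f g) ![u0, t] hFdiff 1,
      pd2_comp (Gcv l m f g) ![u0, t] hGcdiff 0,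
      pd2_comp (Gcv l m f g) ![u0, t] hGcdiff 1]
    have h0 : (Pi.single (0 : Fin 2) (1:ℝ) : Fin 2 → ℝ) 0 = 1 := by simp
    have h1 : (Pi.single (1 : Fin 2) (1:ℝ) : Fin 2 → ℝ) 0 = 0 := by
      simp [Pi.single_eq_of_ne]
    have hp0 : (![u0, t] : Fin 2 → ℝ) 0 = u0 := rfl
    rw [h0, h1, hp0]
    ring
  -- geodesic equation simplification
  have hgeo : ∀ t : ℝ, geodesicEq2 (gInd l m f g) (fun s => ![u0, s]) t ↔
      ∀ k : Fin 2, christoffel2 (gInd l m f g) k 1 1 ![u0, t] = 0 := by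
    intro t
    unfold geodesicEq2
    refine forall_congr' fun k => ?_
    rw [hdd, hderiv_c]
    simp [Fin.sum_univ_two]
  -- inverse matrix entries
  have hM : ∀ t : ℝ, gInd l m f g ![u0, t] =
      !![Ecv l m f g u0, Fcv l m f g u0; Fcv l m f g u0, Gcv l m f g u0] := fun t => rfl
  -- determinant positivity
  have hdetpos : 0 < Ecv l m f g u0 * Gcv l m f g u0 - Fcv l m f g u0 * Fcv l m f g u0 := by
    have h1 : Ecv l m f g u0 * Gcv l m f g u0 - Fcv l m f g u0 * Fcv l m f g u0 =
        ((deriv f u0) ^ 2 * (4 * f u0 ^ 2 + l ^ 2 * f u0 ^ 4)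
          + 4 * f u0 ^ 2 * (deriv g u0) ^ 2 * (1 + m * f u0 ^ 2) ^ 2)
          / (4 * (1 + m * f u0 ^ 2) ^ 4) := by
      simp only [Ecv, Fcv, Gcv]
      field_simp
      ring
    rw [h1]
    apply div_pos ?_ (by positivity)
    by_cases hfd : deriv f u0 = 0
    · have hgd : deriv g u0 ≠ 0 := by
        intro h
        have := hreg u0
        rw [hfd, h] at this
        simp at this
      have h2 : 0 < 4 * f u0 ^ 2 * (deriv g u0) ^ 2 * (1 + m * f u0 ^ 2) ^ 2 := by
        have := hfpos u0
        have := pow_two_pos_of_ne_zero hgd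
        positivity
      nlinarith [sq_nonneg (deriv f u0), sq_nonneg (f u0), hfpos u0,
        sq_nonneg (l * f u0 ^ 2)]
    · have h2 : 0 < (deriv f u0) ^ 2 * (4 * f u0 ^ 2 + l ^ 2 * f u0 ^ 4) := by
        have hfu := hfpos u0
        have h4 : 0 < 4 * f u0 ^ 2 + l ^ 2 * f u0 ^ 4 := by
          nlinarith [mul_pos hfu hfu, sq_nonneg (l * f u0 ^ 2)]
        exact mul_pos (pow_two_pos_of_ne_zero hfd) h4
      nlinarith [sq_nonneg (deriv g u0), sq_nonneg (f u0 * deriv g u0 * (1 + m * f u0 ^ 2))]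
  have hdetne : Ecv l m f g u0 * Gcv l m f g u0 - Fcv l m f g u0 * Fcv l m f g u0 ≠ 0 :=
    ne_of_gt hdetpos
  have hMinv : ∀ (t : ℝ) (k : Fin 2), (gInd l m f g ![u0, t])⁻¹ k 0 =
      (Ecv l m f g u0 * Gcv l m f g u0 - Fcv l m f g u0 * Fcv l m f g u0)⁻¹ *
        (!![Gcv l m f g u0, -Fcv l m f g u0; -Fcv l m f g u0, Ecv l m f g u0] k 0) := by
    intro t k
    rw [hM t, Matrix.inv_def, Matrix.adjugate_fin_two_of, Matrix.det_fin_two_of,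
      Ring.inverse_eq_inv']
    simp [Matrix.smul_apply]
  have hG0pos : 0 < Gcv l m f g u0 := by
    have := hfpos u0
    simp only [Gcv]
    positivity
  constructor
  · intro H
    have h0 := (hgeo 0).mp (H 0) 0
    rw [hchr 0 0, hMinv 0 0] at h0
    have hent : (!![Gcv l m f g u0, -Fcv l m f g u0; -Fcv l m f g u0, Ecv l m f g u0]
        (0 : Fin 2) (0 : Fin 2)) = Gcv l m f g u0 := by simp
    rw [hent] at h0
    have hA : (Ecv l m f g u0 * Gcv l m f g u0 - Fcv l m f g u0 * Fcv l m f g u0)⁻¹ *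
        Gcv l m f g u0 ≠ 0 := mul_ne_zero (inv_ne_zero hdetne) (ne_of_gt hG0pos)
    have hdG : deriv (Gcv l m f g) u0 = 0 := by
      rcases mul_eq_zero.mp (by linear_combination -2 * h0 :
        ((Ecv l m f g u0 * Gcv l m f g u0 - Fcv l m f g u0 * Fcv l m f g u0)⁻¹ *
          Gcv l m f g u0) * deriv (Gcv l m f g) u0 = 0) with h | h
      · exact absurd h hA
      · exact h
    rw [hGc'] at hdG
    have h3 : f u0 * (deriv f u0 * (2 + l ^ 2 * f u0 ^ 2 - 2 * m * f u0 ^ 2)) = 0 := by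
      have hD3 : (1 + m * f u0 ^ 2) ^ 3 ≠ 0 := by positivity
      exact (div_eq_zero_iff.mp hdG).resolve_right hD3
    exact (mul_eq_zero.mp h3).resolve_left (ne_of_gt (hfpos u0))
  · intro hX t
    rw [hgeo t]
    intro k
    rw [hchr t k]
    have hdG : deriv (Gcv l m f g) u0 = 0 := by
      rw [hGc', hX, mul_zero, zero_div]
    rw [hdG]
    ring
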